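/- Let (s_n)_{n=1}^∞ be the summing basis of c₀, where s_n = e_1 + e_2 + … + e_n and (e_n) is the unit vector basis of c₀. Then sh((s_n)) = 1. -/

import Mathlib

open Filter Metric NormedSpace Set Topology

noncomputable section

variable {E : Type*} [NormedAddCommGroup E] [NormedSpace ℝ E]

/-- `f` is the sequence of coordinate functionals of the Schauder basis `x`:
every vector has an expansion along `x`, and such expansions are unique. -/
structure IsSchauderBasis (x : ℕ → E) (f : ℕ → E →L[ℝ] ℝ) : Prop where
  expand : ∀ v : E,
    Tendsto (fun n => ∑ i ∈ Finset.range n, f i v • x i) atTop (𝓝 v)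
  unique : ∀ (a : ℕ → ℝ) (v : E),
    Tendsto (fun n => ∑ i ∈ Finset.range n, a i • x i) atTop (𝓝 v) → ∀ i, a i = f i v

/-- the `n`-th basis projection `P_n`. -/
def basisProj (x : ℕ → E) (f : ℕ → E →L[ℝ] ℝ) (n : ℕ) : E →L[ℝ] E :=
  ∑ i ∈ Finset.range n, (f i).smulRight (x i)

/-- closed linear span of `{y i : i ≥ n}`. -/
def tailSpan (y : ℕ → E) (n : ℕ) : Submodule ℝ E :=
  (Submodule.span ℝ (y '' {i | n ≤ i})).topologicalClosure

/-- `‖g‖_n` : the norm of the restriction of `g` to the closed span of the tail of `y`. -/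
def tailNorm (y : ℕ → E) (g : E →L[ℝ] ℝ) (n : ℕ) : ℝ :=
  ‖g.comp (tailSpan y n).subtypeL‖

/-- the quantity `sh` measuring how far a basic sequence is from being shrinking. -/
def sh (y : ℕ → E) : ℝ :=
  sSup ((fun g : E →L[ℝ] ℝ => limsup (tailNorm y g) atTop) '' {g | ‖g‖ ≤ 1})

/-- non-symmetrised Hausdorff distance `d̂(A,B)`. -/
def hdist (A B : Set E) : ℝ := sSup ((fun a => infDist a B) '' A)

/-- ordinary distance between two sets. -/
def setDist (A B : Set E) : ℝ := sInf {d : ℝ | ∃ a ∈ A, ∃ b ∈ B, d = dist a b}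

/-- `ca` measures how far a sequence is from being norm-Cauchy. -/
def ca (z : ℕ → E) : ℝ :=
  ⨅ n : ℕ, sSup {d : ℝ | ∃ k, n ≤ k ∧ ∃ l, n ≤ l ∧ d = ‖z k - z l‖}

/-- measure of non-separability. -/
def sep (A : Set E) : ℝ :=
  sInf {ε : ℝ | 0 < ε ∧ ∃ C : Set E, C.Countable ∧ ∀ a ∈ A, ∃ c ∈ C, ‖a - c‖ ≤ ε}

/-- `V`: the closed linear span of the coordinate functionals. -/
def dualSpan (g : ℕ → E →L[ℝ] ℝ) : Submodule ℝ (StrongDual ℝ E) :=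
  (Submodule.span ℝ (Set.range g)).topologicalClosure

lemma mem_dualSpan (g : ℕ → E →L[ℝ] ℝ) (i : ℕ) : g i ∈ dualSpan g :=
  Submodule.le_topologicalClosure _ (Submodule.subset_span ⟨i, rfl⟩)

/-- the quantity `bc₁` measuring non-bounded-completeness. -/
def bc1 (y : ℕ → E) : ℝ :=
  sSup {c : ℝ | ∃ a : ℕ → ℝ,
    (∀ n, ‖∑ i ∈ Finset.range n, a i • y i‖ ≤ 1) ∧
    c = ca (fun n => ∑ i ∈ Finset.range n, a i • y i)}

/-- the quantity `bc₂`. -/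
def bc2 (y : ℕ → E) (g : ℕ → E →L[ℝ] ℝ) : ℝ :=
  sSup {c : ℝ | ∃ φ : ↥(dualSpan g) →L[ℝ] ℝ,
    @norm _ (by exact (ContinuousLinearMap.hasOpNorm (𝕜 := ℝ) (𝕜₂ := ℝ)
      (E := ↥(dualSpan g)) (F := ℝ) (σ₁₂ := RingHom.id ℝ))) φ ≤ 1 ∧
    c = ca (fun n => ∑ i ∈ Finset.range n, φ ⟨g i, mem_dualSpan g i⟩ • y i)}

/-- the quantity `bc₃`. -/
def bc3 (y : ℕ → E) (g : ℕ → E →L[ℝ] ℝ) : ℝ :=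
  sSup {c : ℝ | ∃ Φ : StrongDual ℝ (StrongDual ℝ E), ‖Φ‖ ≤ 1 ∧
    c = ca (fun n => ∑ i ∈ Finset.range n, Φ (g i) • y i)}

/-- `α_Y(X)`: measures how well `Y` embeds isomorphically into `X`. -/
def alpha (Y X : Type*) [NormedAddCommGroup Y] [NormedSpace ℝ Y]
    [NormedAddCommGroup X] [NormedSpace ℝ X] : ℝ :=
  sSup {c : ℝ | ∃ T : Y →L[ℝ] X, ‖T‖ ≤ 1 ∧ ∀ y : Y, c * ‖y‖ ≤ ‖T y‖}

/-- `β_Y(X)`: measures how well `Y` embeds complementably into `X`. -/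
def beta (Y X : Type*) [NormedAddCommGroup Y] [NormedSpace ℝ Y]
    [NormedAddCommGroup X] [NormedSpace ℝ X] : ℝ :=
  sSup {c : ℝ | ∃ (A : X →L[ℝ] Y) (B : Y →L[ℝ] X),
    A.comp B = ContinuousLinearMap.id ℝ Y ∧ c * (‖A‖ * ‖B‖) ≤ 1}

/-- weak-star closure of a subset of the bidual. -/
def wstarClosure {X : Type*} [NormedAddCommGroup X] [NormedSpace ℝ X]
    (S : Set (StrongDual ℝ (StrongDual ℝ X))) : Set (StrongDual ℝ (StrongDual ℝ X)) :=
  {z | StrongDual.toWeakDual z ∈ closure (StrongDual.toWeakDual '' S)}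

/-- the measure of weak non-compactness `wk_X(A)`. -/
def wk (X : Type*) [NormedAddCommGroup X] [NormedSpace ℝ X] (A : Set X) : ℝ :=
  hdist (wstarClosure ((inclusionInDoubleDual ℝ X) '' A))
    (Set.range (inclusionInDoubleDual ℝ X))

/-- weak-star cluster points in the bidual of a sequence in `X`. -/
def wclust {X : Type*} [NormedAddCommGroup X] [NormedSpace ℝ X] (u : ℕ → X) :
    Set (StrongDual ℝ (StrongDual ℝ X)) :=
  {z | MapClusterPt (StrongDual.toWeakDual z) atTop
      (fun n => StrongDual.toWeakDual (inclusionInDoubleDual ℝ X (u n)))}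

/-- the measure of weak non-compactness `wck_X(A)`. -/
def wck (X : Type*) [NormedAddCommGroup X] [NormedSpace ℝ X] (A : Set X) : ℝ :=
  sSup {c : ℝ | ∃ u : ℕ → X, (∀ n, u n ∈ A) ∧
    c = setDist (wclust u) (Set.range (inclusionInDoubleDual ℝ X))}


/-- the canonical map `j : X → V*` for a subspace `V` of the dual,
`⟨j v, x*⟩ = x*(v)`. -/
def jfun {X : Type*} [NormedAddCommGroup X] [NormedSpace ℝ X]
    (V : Submodule ℝ (StrongDual ℝ X)) (v : X) : ↥V →L[ℝ] ℝ :=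
  (inclusionInDoubleDual ℝ X v).comp V.subtypeL

/-- the space `ℓ₁` of absolutely summable real sequences. -/
abbrev ell1 : Type := lp (fun _ : ℕ => ℝ) 1

/-- the space `c₀` of real sequences converging to zero, with the sup norm. -/
abbrev czero : Type := ZeroAtInftyContinuousMap ℕ ℝ

end

/-- the summing basis of `c₀`: `summingBasis n = e₁ + ⋯ + e_{n+1}` has its first `n+1`
coordinates equal to `1` and the remaining ones equal to `0`. -/
def summingBasis (n : ℕ) : czero :=
  ⟨⟨fun k => if k ≤ n then (1 : ℝ) else 0, continuous_of_discreteTopology⟩, by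
    rw [cocompact_eq_cofinite, Nat.cofinite_eq_atTop]
    refine Tendsto.congr' ?_ tendsto_const_nhds
    filter_upwards [eventually_ge_atTop (n + 1)] with k hk
    simp [(Nat.lt_of_succ_le hk).not_ge]⟩

/-! Evaluation at the first coordinate is a functional of norm one that equals `1` on every
`sₙ`; since `sₙ` lies in the unit ball and in its own tail span, all tail norms of this
functional are `1`. Tail norms never exceed the norm, so no functional in the unit ball
does better. -/

section TailNorm

variable {E : Type*} [NormedAddCommGroup E] [NormedSpace ℝ E]

lemma tailNorm_nonneg (y : ℕ → E) (g : E →L[ℝ] ℝ) (n : ℕ) : 0 ≤ tailNorm y g n :=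
  norm_nonneg (g.comp (tailSpan y n).subtypeL)

lemma tailNorm_le_norm (y : ℕ → E) (g : E →L[ℝ] ℝ) (n : ℕ) : tailNorm y g n ≤ ‖g‖ :=
  (g.opNorm_comp_le _).trans
    (mul_le_of_le_one_right (norm_nonneg g) (Submodule.norm_subtypeL_le _))

lemma norm_apply_le_tailNorm_mul (y : ℕ → E) (g : E →L[ℝ] ℝ) {n m : ℕ} (hnm : n ≤ m) :
    ‖g (y m)‖ ≤ tailNorm y g n * ‖y m‖ :=
  (g.comp (tailSpan y n).subtypeL).le_opNorm
    ⟨y m, Submodule.le_topologicalClosure _ (Submodule.subset_span ⟨m, hnm, rfl⟩)⟩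

lemma limsup_tailNorm_le_norm (y : ℕ → E) (g : E →L[ℝ] ℝ) :
    limsup (tailNorm y g) atTop ≤ ‖g‖ :=
  limsup_le_of_le (isBoundedUnder_of ⟨0, tailNorm_nonneg y g⟩).isCoboundedUnder_le
    (Eventually.of_forall (tailNorm_le_norm y g))

lemma one_mem_upperBounds_limsup_tailNorm (y : ℕ → E) :
    1 ∈ upperBounds
      ((fun g : E →L[ℝ] ℝ => limsup (tailNorm y g) atTop) '' {g | ‖g‖ ≤ 1}) :=
  forall_mem_image.2 fun g hg => (limsup_tailNorm_le_norm y g).trans hg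

lemma sh_le_one (y : ℕ → E) : sh y ≤ 1 :=
  csSup_le ⟨_, mem_image_of_mem _ (show ‖(0 : E →L[ℝ] ℝ)‖ ≤ 1 by simp)⟩
    (one_mem_upperBounds_limsup_tailNorm y)

theorem sh_eq_one_of_forall_apply_eq_one {y : ℕ → E} {g : E →L[ℝ] ℝ} (hg : ‖g‖ ≤ 1)
    (hy : ∀ n, ‖y n‖ ≤ 1) (hgy : ∀ n, g (y n) = 1) : sh y = 1 := by
  have htail : tailNorm y g = fun _ => 1 := by
    funext n
    refine le_antisymm ((tailNorm_le_norm y g n).trans hg) ?_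
    calc (1 : ℝ) = ‖g (y n)‖ := by simp [hgy n]
      _ ≤ tailNorm y g n * ‖y n‖ := norm_apply_le_tailNorm_mul y g le_rfl
      _ ≤ tailNorm y g n := mul_le_of_le_one_right (tailNorm_nonneg y g n) (hy n)
  refine le_antisymm (sh_le_one y) (le_csSup ⟨1, one_mem_upperBounds_limsup_tailNorm y⟩ ?_)
  exact ⟨g, hg, by simp only [htail, limsup_const]⟩

end TailNorm

namespace ZeroAtInftyContinuousMap

open scoped ZeroAtInfty

variable {α : Type*} [TopologicalSpace α]

lemma norm_apply_le (f : C₀(α, ℝ)) (x : α) : ‖f x‖ ≤ ‖f‖ :=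
  norm_toBCF_eq_norm (f := f) ▸ f.toBCF.norm_coe_le_norm x

noncomputable def evalCLM (x : α) : C₀(α, ℝ) →L[ℝ] ℝ :=
  LinearMap.mkContinuous
    { toFun := fun f => f x
      map_add' := fun _ _ => rfl
      map_smul' := fun _ _ => rfl }
    1 fun f => (one_mul ‖f‖).symm ▸ norm_apply_le f x

lemma norm_evalCLM_le (x : α) : ‖evalCLM x‖ ≤ 1 :=
  LinearMap.mkContinuous_norm_le _ zero_le_one _

end ZeroAtInftyContinuousMap

lemma norm_summingBasis_le (n : ℕ) : ‖summingBasis n‖ ≤ 1 := by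
  rw [← ZeroAtInftyContinuousMap.norm_toBCF_eq_norm]
  refine (BoundedContinuousFunction.norm_le zero_le_one).2 fun k => ?_
  show ‖if k ≤ n then (1 : ℝ) else 0‖ ≤ 1
  split_ifs <;> simp

lemma summingBasis_apply_zero (n : ℕ) : summingBasis n 0 = 1 :=
  show (if 0 ≤ n then (1 : ℝ) else 0) = 1 from if_pos n.zero_le

/-- for the summing basis `(sₙ)` of `c₀`, `sh((sₙ)) = 1`. -/
theorem sh_summingBasis_c0 : sh summingBasis = 1 :=
  sh_eq_one_of_forall_apply_eq_one (ZeroAtInftyContinuousMap.norm_evalCLM_le 0)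
    norm_summingBasis_le summingBasis_apply_zero
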